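/- Fix ε > 0 and θ ∈ (0, π/2). The Cauchy problem U'' = (1/ε)(1+(U')²)^{5/4} √(√(1+(U')²) − 1) on (−∞, 0] with U(0) = 0 and U'(0) = tan θ has a unique solution U_{θ,ε} : (−∞,0] → ℝ satisfying U_{θ,ε} < 0, U'_{θ,ε} > 0, U''_{θ,ε} > 0 on (−∞,0); moreover U_{θ,ε}(x) = ε·U_{θ,1}(x/ε) for all x ≤ 0, and U'_{θ,1}(x) → 0 as x → −∞. -/

import Mathlib

/-!
With `p = U'` the equation is the autonomous first-order equation `p' = F(p)/ε`, where
`F(q) = (1+q²)^{5/4} √(√(1+q²) - 1) = |q| g(q)` with `g` smooth and positive. Hence `F` is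
locally Lipschitz, which gives uniqueness, and `F(q) = O(q)` as `q → 0⁺`, so the equilibrium `0`
is only reached in infinite time. For `ε = 1` the solution is found by separation of variables:
`p` is the inverse of `q ↦ ∫_{tan θ}^q dt / F(t)`, an increasing map of `(0, ∞)` onto an interval
`(-∞, L)` with `L > 0`, and `U(x) = ∫_0^x p`. Since the equation is autonomous,
`x ↦ ε U_{θ,1}(x/ε)` then solves the problem for `ε`.
-/

open Real Set Filter Topology

/-- `U` solves the profile Cauchy problem
`U'' = (1/ε)(1+(U')²)^{5/4}√(√(1+(U')²)−1)` on `(−∞,0]`, `U(0)=0`, `U'(0)=tan θ`. -/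
def IsProfileSol (ε θ : ℝ) (U : ℝ → ℝ) : Prop :=
  (∀ x ≤ (0:ℝ), DifferentiableAt ℝ U x ∧ DifferentiableAt ℝ (deriv U) x) ∧
  U 0 = 0 ∧ deriv U 0 = Real.tan θ ∧
  ∀ x ≤ (0:ℝ), deriv (deriv U) x =
    (1/ε) * (1 + (deriv U x) ^ 2) ^ ((5:ℝ)/4) *
      Real.sqrt (Real.sqrt (1 + (deriv U x) ^ 2) - 1)

noncomputable def profileRHS (q : ℝ) : ℝ := (1 + q ^ 2) ^ ((5 : ℝ) / 4) * √(√(1 + q ^ 2) - 1)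

noncomputable def profileGain (q : ℝ) : ℝ := (1 + q ^ 2) ^ ((5 : ℝ) / 4) / √(√(1 + q ^ 2) + 1)

lemma profileGain_pos (q : ℝ) : 0 < profileGain q := by
  unfold profileGain
  positivity

lemma contDiff_profileGain : ContDiff ℝ 1 profileGain := by
  rw [contDiff_iff_contDiffAt]
  intro q
  have hq : 1 + q ^ 2 ≠ 0 := by positivity
  have hroot_pos : 0 < √(1 + q ^ 2) + 1 := by positivity
  have hbase : ContDiffAt ℝ 1 (fun q : ℝ => 1 + q ^ 2) q := by fun_prop
  have hnum := (Real.contDiffAt_rpow_const_of_ne (p := (5 : ℝ) / 4) hq).comp q hbase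
  have hroot := ((Real.contDiffAt_sqrt hq).comp q hbase).add (contDiffAt_const (c := (1 : ℝ)))
  have hden := (Real.contDiffAt_sqrt hroot_pos.ne').comp q hroot
  exact hnum.div hden (Real.sqrt_pos.mpr hroot_pos).ne'

/-- Rationalising `√(√(1+q²) - 1) = |q| / √(√(1+q²) + 1)` exhibits `|q|` as the only
non-smooth factor. -/
lemma profileRHS_eq_abs_mul (q : ℝ) : profileRHS q = |q| * profileGain q := by
  have key : √(1 + q ^ 2) - 1 = q ^ 2 / (√(1 + q ^ 2) + 1) := by
    rw [eq_div_iff (by positivity)]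
    nlinarith [Real.sq_sqrt (by positivity : (0 : ℝ) ≤ 1 + q ^ 2)]
  rw [profileRHS, profileGain, key, Real.sqrt_div (sq_nonneg q), Real.sqrt_sq_eq_abs]
  ring

lemma profileRHS_pos {q : ℝ} (hq : 0 < q) : 0 < profileRHS q := by
  rw [profileRHS_eq_abs_mul]
  exact mul_pos (abs_pos.mpr hq.ne') (profileGain_pos q)

lemma locallyLipschitz_profileRHS : LocallyLipschitz profileRHS := by
  have hsmooth : LocallyLipschitz fun r => r * profileGain r :=
    (contDiff_id.mul contDiff_profileGain).locallyLipschitz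
  have hcomp : profileRHS = (fun r => r * profileGain r) ∘ norm := by
    ext q
    simp only [Function.comp, Real.norm_eq_abs, profileRHS_eq_abs_mul, profileGain, sq_abs]
  rw [hcomp]
  exact hsmooth.comp lipschitzWith_one_norm.locallyLipschitz

lemma continuous_profileRHS : Continuous profileRHS := locallyLipschitz_profileRHS.continuous

lemma exists_profileRHS_le_mul (b : ℝ) : ∃ C, ∀ q ∈ Ioo 0 b, profileRHS q ≤ C * q := by
  obtain ⟨C, hC⟩ := isCompact_Icc.exists_bound_of_continuousOn
    (contDiff_profileGain.continuous.continuousOn (s := Icc 0 b))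
  refine ⟨C, fun q hq => ?_⟩
  rw [profileRHS_eq_abs_mul, abs_of_pos hq.1, mul_comm]
  exact mul_le_mul_of_nonneg_right
    ((le_abs_self _).trans (hC q (Ioo_subset_Icc_self hq))) hq.1.le

section Uniqueness

variable {E : Type*} [NormedAddCommGroup E] [NormedSpace ℝ E] {f g : ℝ → E} {b : ℝ}

lemma continuousOn_Icc_of_hasDerivAt {f' : ℝ → E} {a : ℝ} (hf : ∀ t ≤ b, HasDerivAt f (f' t) t) :
    ContinuousOn f (Icc a b) :=
  fun t ht => (hf t ht.2).continuousAt.continuousWithinAt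

theorem eqOn_Iic_of_hasDerivAt_of_locallyLipschitz {v : E → E} (hv : LocallyLipschitz v)
    (hf : ∀ t ≤ b, HasDerivAt f (v (f t)) t) (hg : ∀ t ≤ b, HasDerivAt g (v (g t)) t)
    (hb : f b = g b) : EqOn f g (Iic b) := by
  intro x hx
  have hfc : ContinuousOn f (Icc x b) := continuousOn_Icc_of_hasDerivAt hf
  have hgc : ContinuousOn g (Icc x b) := continuousOn_Icc_of_hasDerivAt hg
  obtain ⟨K, hK⟩ := hv.locallyLipschitzOn.exists_lipschitzOnWith_of_compact
    ((isCompact_Icc.image_of_continuousOn hfc).union (isCompact_Icc.image_of_continuousOn hgc))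
  exact ODE_solution_unique_of_mem_Icc_left (v := fun _ => v) (fun _ _ => hK)
    hfc (fun t ht => (hf t ht.2).hasDerivWithinAt)
    (fun t ht => .inl (mem_image_of_mem f (Ioc_subset_Icc_self ht)))
    hgc (fun t ht => (hg t ht.2).hasDerivWithinAt)
    (fun t ht => .inr (mem_image_of_mem g (Ioc_subset_Icc_self ht))) hb ⟨le_rfl, hx⟩

theorem eqOn_Iic_of_hasDerivAt {f' : ℝ → E} (hf : ∀ t ≤ b, HasDerivAt f (f' t) t)
    (hg : ∀ t ≤ b, HasDerivAt g (f' t) t) (hb : f b = g b) : EqOn f g (Iic b) := fun _ hx =>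
  ODE_solution_unique_of_mem_Icc_left (v := fun t _ => f' t) (s := fun _ => univ) (K := 0)
    (fun _ _ => (LipschitzWith.const _).lipschitzOnWith)
    (continuousOn_Icc_of_hasDerivAt hf) (fun t ht => (hf t ht.2).hasDerivWithinAt)
    (fun _ _ => trivial)
    (continuousOn_Icc_of_hasDerivAt hg) (fun t ht => (hg t ht.2).hasDerivWithinAt)
    (fun _ _ => trivial) hb ⟨le_rfl, hx⟩

end Uniqueness

section SeparationOfVariables

variable {F : ℝ → ℝ} {t₀ : ℝ}

/-- The time a solution of `p' = F p` needs to travel from `t₀` to `q`; the solution is its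
inverse function. -/
noncomputable def travelTime (F : ℝ → ℝ) (t₀ q : ℝ) : ℝ := ∫ t in t₀..q, (F t)⁻¹

lemma intervalIntegrable_inv_of_pos (hF : ContinuousOn F (Ioi 0)) (hFpos : ∀ q > 0, 0 < F q)
    {a b : ℝ} (ha : 0 < a) (hb : 0 < b) :
    IntervalIntegrable (fun t => (F t)⁻¹) MeasureTheory.volume a b :=
  ((hF.inv₀ fun t ht => (hFpos t ht).ne').mono
    fun _ ht => (lt_min ha hb).trans_le ht.1).intervalIntegrable

lemma hasDerivAt_travelTime (hF : ContinuousOn F (Ioi 0)) (hFpos : ∀ q > 0, 0 < F q)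
    (ht₀ : 0 < t₀) {q : ℝ} (hq : 0 < q) : HasDerivAt (travelTime F t₀) (F q)⁻¹ q := by
  have hinv : ContinuousOn (fun t => (F t)⁻¹) (Ioi 0) := hF.inv₀ fun t ht => (hFpos t ht).ne'
  exact intervalIntegral.integral_hasDerivAt_right
    (intervalIntegrable_inv_of_pos hF hFpos ht₀ hq)
    (hinv.stronglyMeasurableAtFilter isOpen_Ioi q hq) (hinv.continuousAt (Ioi_mem_nhds hq))

lemma tendsto_travelTime_nhdsGT_zero (hF : ContinuousOn F (Ioi 0))
    (hFpos : ∀ q > 0, 0 < F q) (ht₀ : 0 < t₀) {C : ℝ} (hC : ∀ q ∈ Ioo 0 t₀, F q ≤ C * q) :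
    Tendsto (travelTime F t₀) (𝓝[>] 0) atBot := by
  have hC₀ : 0 < C := by
    have h := hC (t₀ / 2) ⟨by positivity, by linarith⟩
    exact pos_of_mul_pos_left ((hFpos _ (by positivity)).trans_le h) (by positivity)
  -- Comparison with the travel time `C⁻¹ log (q / t₀)` of the linear field `q ↦ C q`.
  have hle : ∀ q ∈ Ioo 0 t₀, travelTime F t₀ q ≤ C⁻¹ * log q - C⁻¹ * log t₀ := by
    intro q hq
    have hcomp : ∫ t in q..t₀, (C * t)⁻¹ ≤ ∫ t in q..t₀, (F t)⁻¹ := by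
      refine intervalIntegral.integral_mono_on_of_le_Ioo hq.2.le ?_
        (intervalIntegrable_inv_of_pos hF hFpos hq.1 ht₀) fun t ht => ?_
      · exact intervalIntegrable_inv_of_pos (F := (C * ·)) (by fun_prop)
          (fun t ht => mul_pos hC₀ ht) hq.1 ht₀
      · have ht₀' : 0 < t := hq.1.trans ht.1
        exact inv_anti₀ (hFpos t ht₀') (hC t ⟨ht₀', ht.2⟩)
    have heval : ∫ t in q..t₀, (C * t)⁻¹ = C⁻¹ * (log t₀ - log q) := by
      simp only [mul_inv, intervalIntegral.integral_const_mul, integral_inv_of_pos hq.1 ht₀,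
        log_div ht₀.ne' hq.1.ne']
    rw [travelTime, intervalIntegral.integral_symm]
    linarith
  refine tendsto_atBot_mono' _ ?_ (tendsto_atBot_add_const_right _ (-(C⁻¹ * log t₀))
    (tendsto_log_nhdsGT_zero.const_mul_atBot (inv_pos.mpr hC₀)))
  filter_upwards [Ioo_mem_nhdsGT ht₀] with q hq
  linarith [hle q hq]

end SeparationOfVariables

section Inverse

variable {G : ℝ → ℝ} {T : ℝ}

lemma strictMonoOn_Ioi_of_hasDerivAt_pos {G' : ℝ → ℝ} (hG : ∀ q > 0, HasDerivAt G (G' q) q)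
    (hG' : ∀ q > 0, 0 < G' q) : StrictMonoOn G (Ioi 0) :=
  strictMonoOn_of_deriv_pos (convex_Ioi 0)
    (fun q hq => (hG q hq).continuousAt.continuousWithinAt)
    fun q hq => by rw [interior_Ioi] at hq; rw [(hG q hq).deriv]; exact hG' q hq

lemma Iio_subset_image_Ioo (hG : ContinuousOn G (Ioi 0)) (hbot : Tendsto G (𝓝[>] 0) atBot)
    (hT : 0 < T) : Iio (G T) ⊆ G '' Ioo 0 T := by
  intro x hx
  obtain ⟨q, hGq, hq⟩ :=
    ((hbot.eventually (eventually_lt_atBot x)).and (Ioo_mem_nhdsGT hT)).exists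
  obtain ⟨r, hr, rfl⟩ := intermediate_value_Ico hq.2.le
    (hG.mono fun t ht => hq.1.trans_le ht.1) ⟨hGq.le, hx⟩
  exact ⟨r, ⟨hq.1.trans_le hr.1, hr.2⟩, rfl⟩

theorem exists_hasDerivAt_inverse {G' : ℝ → ℝ} (hG : ∀ q > 0, HasDerivAt G (G' q) q)
    (hG' : ∀ q > 0, 0 < G' q) (hbot : Tendsto G (𝓝[>] 0) atBot) (hT : 0 < T) :
    ∃ p : ℝ → ℝ, (∀ x < G T, p x ∈ Ioo 0 T ∧ G (p x) = x ∧ HasDerivAt p (G' (p x))⁻¹ x) ∧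
      Tendsto p atBot (𝓝 0) := by
  have hmono := strictMonoOn_Ioi_of_hasDerivAt_pos hG hG'
  have hsurj := Iio_subset_image_Ioo
    (fun q hq => (hG q hq).continuousAt.continuousWithinAt) hbot hT
  set p := Function.invFunOn G (Ioo 0 T)
  have hpmem : ∀ x < G T, p x ∈ Ioo 0 T := fun x hx => Function.invFunOn_mem (hsurj hx)
  have hGp : ∀ x < G T, G (p x) = x := fun x hx => Function.invFunOn_eq (hsurj hx)
  have hpG : ∀ q ∈ Ioo 0 T, p (G q) = q := fun q hq =>
    hmono.injOn (hpmem _ (hmono hq.1 hT hq.2)).1 hq.1 (hGp _ (hmono hq.1 hT hq.2))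
  have hp_lt : ∀ x < G T, ∀ r > 0, p x < r ↔ x < G r := fun x hx r hr => by
    conv_rhs => rw [← hGp x hx]
    exact (hmono.lt_iff_lt (hpmem x hx).1 hr).symm
  have hpmono : StrictMonoOn p (Iio (G T)) := fun x hx y hy hxy =>
    (hp_lt x hx _ (hpmem y hy).1).2 (by rwa [hGp y hy])
  have hpcont : ∀ x < G T, ContinuousAt p x := fun x hx =>
    hpmono.continuousAt_of_image_mem_nhds (Iio_mem_nhds hx) <| mem_of_superset
      (isOpen_Ioo.mem_nhds (hpmem x hx)) fun q hq => ⟨G q, hmono hq.1 hT hq.2, hpG q hq⟩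
  refine ⟨p, fun x hx => ⟨hpmem x hx, hGp x hx, ?_⟩, ?_⟩
  · exact (hG _ (hpmem x hx).1).of_local_left_inverse (hpcont x hx) (hG' _ (hpmem x hx).1).ne'
      (eventually_of_mem (Iio_mem_nhds hx) hGp)
  · refine tendsto_order.2 ⟨fun a ha => ?_, fun b hb => ?_⟩
    · filter_upwards [Iio_mem_atBot (G T)] with x hx using ha.trans (hpmem x hx).1
    · have hbT : 0 < min b T := lt_min hb hT
      filter_upwards [Iio_mem_atBot (G (min b T))] with x hx
      have hxT : x < G T := hx.trans_le (hmono.monotoneOn hbT hT (min_le_right b T))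
      exact ((hp_lt x hxT _ hbT).2 hx).trans_le (min_le_left b T)

end Inverse

theorem exists_hasDerivAt_tendsto_zero_atBot {F : ℝ → ℝ} {t₀ C : ℝ}
    (hF : ContinuousOn F (Ioi 0)) (hFpos : ∀ q > 0, 0 < F q) (ht₀ : 0 < t₀)
    (hC : ∀ q ∈ Ioo 0 t₀, F q ≤ C * q) :
    ∃ p : ℝ → ℝ, ∃ L > 0, p 0 = t₀ ∧ (∀ x < L, 0 < p x ∧ HasDerivAt p (F (p x)) x) ∧
      Tendsto p atBot (𝓝 0) := by
  have hG : ∀ q > 0, HasDerivAt (travelTime F t₀) (F q)⁻¹ q :=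
    fun q hq => hasDerivAt_travelTime hF hFpos ht₀ hq
  have hG' : ∀ q > 0, 0 < (F q)⁻¹ := fun q hq => inv_pos.mpr (hFpos q hq)
  have hmono := strictMonoOn_Ioi_of_hasDerivAt_pos hG hG'
  have hG₀ : travelTime F t₀ t₀ = 0 := intervalIntegral.integral_same
  obtain ⟨p, hp, hlim⟩ := exists_hasDerivAt_inverse hG hG'
    (tendsto_travelTime_nhdsGT_zero hF hFpos ht₀ hC) (T := t₀ + 1) (by linarith)
  have hL : 0 < travelTime F t₀ (t₀ + 1) :=
    hG₀ ▸ hmono ht₀ (by rw [mem_Ioi]; positivity) (by linarith)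
  refine ⟨p, _, hL, ?_, fun x hx => ⟨(hp x hx).1.1, by simpa using (hp x hx).2.2⟩, hlim⟩
  exact hmono.injOn (hp 0 hL).1.1 ht₀ ((hp 0 hL).2.1.trans hG₀.symm)

lemma hasDerivAt_integral_of_continuousOn_Iio {E : Type*} [NormedAddCommGroup E]
    [NormedSpace ℝ E] [CompleteSpace E] {p : ℝ → E} {a x L : ℝ} (hp : ContinuousOn p (Iio L))
    (ha : a < L) (hx : x < L) : HasDerivAt (fun y => ∫ t in a..y, p t) (p x) x :=
  intervalIntegral.integral_hasDerivAt_right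
    ((hp.mono fun _ ht => ht.2.trans_lt (max_lt ha hx)).intervalIntegrable)
    (hp.stronglyMeasurableAtFilter isOpen_Iio x hx) (hp.continuousAt (Iio_mem_nhds hx))

lemma deriv_comp_div_const (f : ℝ → ℝ) (c x : ℝ) :
    deriv (fun y => f (y / c)) x = c⁻¹ * deriv f (x / c) := by
  simp only [div_eq_inv_mul]
  exact deriv_comp_mul_left c⁻¹ f x

lemma deriv_const_mul_comp_div {c : ℝ} (hc : c ≠ 0) (f : ℝ → ℝ) :
    deriv (fun y => c * f (y / c)) = fun y => deriv f (y / c) := by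
  ext x
  rw [deriv_const_mul_field, deriv_comp_div_const, mul_inv_cancel_left₀ hc]

namespace IsProfileSol

variable {ε θ : ℝ} {U V : ℝ → ℝ}

lemma deriv_deriv_eq (hU : IsProfileSol ε θ U) {x : ℝ} (hx : x ≤ 0) :
    deriv (deriv U) x = ε⁻¹ * profileRHS (deriv U x) := by
  rw [hU.2.2.2 x hx, profileRHS, one_div, mul_assoc]

lemma hasDerivAt (hU : IsProfileSol ε θ U) {x : ℝ} (hx : x ≤ 0) :
    HasDerivAt U (deriv U x) x :=
  (hU.1 x hx).1.hasDerivAt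

lemma hasDerivAt_deriv (hU : IsProfileSol ε θ U) {x : ℝ} (hx : x ≤ 0) :
    HasDerivAt (deriv U) (ε⁻¹ * profileRHS (deriv U x)) x :=
  hU.deriv_deriv_eq hx ▸ (hU.1 x hx).2.hasDerivAt

lemma deriv_eqOn (hU : IsProfileSol ε θ U) (hV : IsProfileSol ε θ V) :
    EqOn (deriv U) (deriv V) (Iic 0) :=
  eqOn_Iic_of_hasDerivAt_of_locallyLipschitz
    ((lipschitzWith_smul ε⁻¹).locallyLipschitz.comp locallyLipschitz_profileRHS)
    (fun _ ht => hU.hasDerivAt_deriv ht) (fun _ ht => hV.hasDerivAt_deriv ht)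
    (hU.2.2.1.trans hV.2.2.1.symm)

lemma eqOn (hU : IsProfileSol ε θ U) (hV : IsProfileSol ε θ V) : EqOn U V (Iic 0) :=
  eqOn_Iic_of_hasDerivAt (fun _ ht => hU.hasDerivAt ht)
    (fun _ ht => hU.deriv_eqOn hV ht ▸ hV.hasDerivAt ht) (hU.2.1.trans hV.2.1.symm)

lemma deriv_deriv_pos (hU : IsProfileSol ε θ U) (hε : 0 < ε) {x : ℝ} (hx : x ≤ 0)
    (hpos : 0 < deriv U x) : 0 < deriv (deriv U) x := by
  rw [hU.deriv_deriv_eq hx]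
  exact mul_pos (inv_pos.mpr hε) (profileRHS_pos hpos)

lemma lt_zero_of_deriv_pos (hU : IsProfileSol ε θ U) (hpos : ∀ x < 0, 0 < deriv U x) {x : ℝ}
    (hx : x < 0) : U x < 0 := by
  have hmono : StrictMonoOn U (Iic 0) := strictMonoOn_of_deriv_pos (convex_Iic 0)
    (fun t ht => (hU.hasDerivAt ht).continuousAt.continuousWithinAt)
    (fun t ht => hpos t (by rwa [interior_Iic] at ht))
  exact hU.2.1 ▸ hmono hx.le (le_refl (0 : ℝ)) hx

lemma rescale (hS : IsProfileSol 1 θ U) (hε : 0 < ε) :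
    IsProfileSol ε θ (fun x => ε * U (x / ε)) := by
  have hd := deriv_const_mul_comp_div hε.ne' U
  have hdiv : ∀ x : ℝ, DifferentiableAt ℝ (· / ε) x := fun x => differentiableAt_id.div_const ε
  have hx' : ∀ x ≤ (0 : ℝ), x / ε ≤ 0 := fun x hx => div_nonpos_of_nonpos_of_nonneg hx hε.le
  refine ⟨fun x hx => ⟨?_, ?_⟩, by simp [hS.2.1], by simp [hd, hS.2.2.1], fun x hx => ?_⟩
  · exact ((hS.1 _ (hx' x hx)).1.comp x (hdiv x)).const_mul ε
  · rw [hd]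
    exact (hS.1 _ (hx' x hx)).2.comp x (hdiv x)
  · rw [hd, deriv_comp_div_const, hS.2.2.2 _ (hx' x hx)]
    ring

end IsProfileSol

theorem exists_isProfileSol_one {θ : ℝ} (hθ : θ ∈ Ioo 0 (π / 2)) :
    ∃ S : ℝ → ℝ, IsProfileSol 1 θ S ∧ (∀ x ≤ 0, 0 < deriv S x) ∧
      Tendsto (deriv S) atBot (𝓝 0) := by
  obtain ⟨C, hC⟩ := exists_profileRHS_le_mul (tan θ)
  obtain ⟨p, L, hL, hp0, hp, hlim⟩ := exists_hasDerivAt_tendsto_zero_atBot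
    continuous_profileRHS.continuousOn (fun _ hq => profileRHS_pos hq)
    (tan_pos_of_pos_of_lt_pi_div_two hθ.1 hθ.2) hC
  have hS : ∀ x < L, HasDerivAt (fun y => ∫ t in (0 : ℝ)..y, p t) (p x) x :=
    fun x hx => hasDerivAt_integral_of_continuousOn_Iio
      (fun y hy => (hp y hy).2.continuousAt.continuousWithinAt) hL hx
  have hS' : ∀ x < L, HasDerivAt (deriv fun y => ∫ t in (0 : ℝ)..y, p t) (profileRHS (p x)) x :=
    fun x hx => (hp x hx).2.congr_of_eventuallyEq
      (eventually_of_mem (Iio_mem_nhds hx) fun y hy => (hS y hy).deriv)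
  have hxL : ∀ x ≤ (0 : ℝ), x < L := fun x hx => hx.trans_lt hL
  refine ⟨_, ⟨fun x hx => ⟨(hS x (hxL x hx)).differentiableAt,
      (hS' x (hxL x hx)).differentiableAt⟩, intervalIntegral.integral_same,
      (hS 0 hL).deriv.trans hp0, fun x hx => ?_⟩,
    fun x hx => (hS x (hxL x hx)).deriv ▸ (hp x (hxL x hx)).1, ?_⟩
  · rw [(hS' x (hxL x hx)).deriv, (hS x (hxL x hx)).deriv, one_div_one, one_mul]
    rfl
  · refine hlim.congr' ?_
    filter_upwards [Iio_mem_atBot L] with x hx using (hS x hx).deriv.symm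

theorem profile_ode_existence_uniqueness
    (ε θ : ℝ) (hε : 0 < ε) (hθ : θ ∈ Ioo (0:ℝ) (π / 2)) :
    ∃ U : ℝ → ℝ, IsProfileSol ε θ U ∧
      (∀ x < (0:ℝ), U x < 0 ∧ 0 < deriv U x ∧ 0 < deriv (deriv U) x) ∧
      (∀ V : ℝ → ℝ, IsProfileSol ε θ V → ∀ x ≤ (0:ℝ), V x = U x) ∧
      (∀ U₁ : ℝ → ℝ, IsProfileSol 1 θ U₁ →
        (∀ x ≤ (0:ℝ), U x = ε * U₁ (x / ε)) ∧
        Tendsto (deriv U₁) atBot (nhds 0)) := by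
  obtain ⟨S, hS, hS_deriv_pos, hS_lim⟩ := exists_isProfileSol_one hθ
  have hdiv : ∀ x ≤ (0 : ℝ), x / ε ≤ 0 := fun x hx => div_nonpos_of_nonpos_of_nonneg hx hε.le
  have hU := hS.rescale hε
  have hU_deriv_pos : ∀ x ≤ 0, 0 < deriv (fun y => ε * S (y / ε)) x := fun x hx => by
    rw [deriv_const_mul_comp_div hε.ne']
    exact hS_deriv_pos _ (hdiv x hx)
  refine ⟨_, hU, fun x hx => ⟨?_, hU_deriv_pos x hx.le, ?_⟩, fun V hV x hx => hV.eqOn hU hx,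
    fun U₁ hU₁ => ⟨fun x hx => by rw [hS.eqOn hU₁ (hdiv x hx)], ?_⟩⟩
  · exact hU.lt_zero_of_deriv_pos (fun y hy => hU_deriv_pos y hy.le) hx
  · exact hU.deriv_deriv_pos hε hx.le (hU_deriv_pos x hx.le)
  · exact hS_lim.congr' (eventually_of_mem (Iic_mem_atBot 0) (hS.deriv_eqOn hU₁))
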